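/- arXiv:2408.10408 — 2 statements merged into one kernel-verified Lean document; each statement's English description precedes it below -/
import Mathlib

section
/- Let R be a commutative ring, a : ℤ → R with a(d) = 0 for d < 0, and d ≥ 1 a fixed integer. Define b : ℤ → R by b(i) = a(d·i) for i ≥ 0 and b(i) = 0 for i < 0. Then for partitions λ, μ with at most r parts, det( b(λ_i − μ_j − i + j) )_{i,j=1}^r = det( a(α_i − β_j − i + j) )_{i,j=1}^r, where α_i = d·λ_i + (d−1)(r−i) and β_j = d·μ_j + (d−1)(r−j). In particular, if a is a Pólya frequency sequence (over ℝ, nonnegative) then so is its d-th Veronese b. -/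
/-!
Since `a` vanishes on negative indices, `veroneseSeq a d k = a (d * k)` for every integer `k`.
The shift `(d - 1)(r - 1 - i)` in the rescaled row index is designed so that
`α_i - β_j - i + j = d (λ_i - μ_j - i + j)`; hence the two Toeplitz matrices agree entrywise.
Likewise a minor of the Veronese with rows `r` and columns `c` is the minor of `a` with rows
`d r` and columns `d c`, which are still strictly increasing.
-/

/-- The `d`-th Veronese of a sequence vanishing on negatives. -/
noncomputable def veroneseSeq {R : Type*} [CommRing R] (a : ℤ → R) (d : ℕ) : ℤ → R :=
  fun i => if i < 0 then 0 else a (d * i)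

/-- Row and column indices range over `ℕ`; shifting both by a common integer does not change
a Toeplitz minor, so these are all the minors of `(a (i - j))`. -/
def IsPolyaFrequency (a : ℤ → ℝ) : Prop :=
  ∀ (n : ℕ) (r c : Fin n → ℕ), StrictMono r → StrictMono c →
    0 ≤ Matrix.det (Matrix.of fun i j : Fin n => a ((r i : ℤ) - (c j : ℤ)))

lemma veroneseSeq_eq_of_forall_neg {R : Type*} [CommRing R] {a : ℤ → R}
    (ha : ∀ k : ℤ, k < 0 → a k = 0) {d : ℕ} (hd : 0 < d) (k : ℤ) :
    veroneseSeq a d k = a (d * k) := by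
  by_cases hk : k < 0
  · simp [veroneseSeq, hk, ha _ (mul_neg_of_pos_of_neg (Int.natCast_pos.mpr hd) hk)]
  · simp [veroneseSeq, hk]

lemma rescaledIndex_sub {d r i j : ℕ} (hd : 0 < d) (hi : i < r) (hj : j < r) (l m : ℕ) :
    ((d * l + (d - 1) * (r - 1 - i) : ℕ) : ℤ) - ((d * m + (d - 1) * (r - 1 - j) : ℕ) : ℤ)
      - i + j = d * ((l : ℤ) - m - i + j) := by
  push_cast [Nat.cast_sub hd, Nat.cast_sub (Nat.le_sub_one_of_lt hi),
    Nat.cast_sub (Nat.le_sub_one_of_lt hj), Nat.cast_sub (Nat.one_le_of_lt hi)]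
  ring

lemma det_toeplitz_veroneseSeq {R : Type*} [CommRing R] {a : ℤ → R}
    (ha : ∀ k : ℤ, k < 0 → a k = 0) {d : ℕ} (hd : 0 < d) (r : ℕ) (lam mu : Fin r → ℕ) :
    Matrix.det (Matrix.of fun i j : Fin r =>
        veroneseSeq a d ((lam i : ℤ) - (mu j : ℤ) - (i : ℤ) + (j : ℤ))) =
      Matrix.det (Matrix.of fun i j : Fin r =>
        a (((d * lam i + (d - 1) * (r - 1 - (i : ℕ)) : ℕ) : ℤ)
          - ((d * mu j + (d - 1) * (r - 1 - (j : ℕ)) : ℕ) : ℤ)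
          - (i : ℤ) + (j : ℤ))) := by
  congr 1
  ext i j
  rw [Matrix.of_apply, Matrix.of_apply, rescaledIndex_sub hd i.isLt j.isLt,
    veroneseSeq_eq_of_forall_neg ha hd]

lemma IsPolyaFrequency.veronese {a : ℤ → ℝ} (hpf : IsPolyaFrequency a)
    (ha : ∀ k : ℤ, k < 0 → a k = 0) {d : ℕ} (hd : 0 < d) :
    IsPolyaFrequency (veroneseSeq a d) := by
  intro n r c hr hc
  have hminor : (Matrix.of fun i j : Fin n => veroneseSeq a d ((r i : ℤ) - (c j : ℤ))) =
      Matrix.of fun i j : Fin n => a (((d * r i : ℕ) : ℤ) - ((d * c j : ℕ) : ℤ)) := by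
    ext i j
    rw [Matrix.of_apply, Matrix.of_apply, veroneseSeq_eq_of_forall_neg ha hd]
    push_cast
    ring_nf
  rw [hminor]
  exact hpf n (d * r ·) (d * c ·) (hr.const_mul hd) (hc.const_mul hd)

/-- Toeplitz minors of the `d`-th Veronese of a sequence are Toeplitz minors
of the original sequence (via the index rescaling `α_i = dλ_i + (d-1)(r-i)`); in
particular the Veronese of a Pólya frequency sequence is again a Pólya frequency
sequence. -/
theorem stmt_2 {R : Type*} [CommRing R] (a : ℤ → R)
    (ha : ∀ k : ℤ, k < 0 → a k = 0) (d : ℕ) (hd : 1 ≤ d) :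
    (∀ (r : ℕ) (lam mu : Fin r → ℕ),
      (∀ i j : Fin r, i ≤ j → lam j ≤ lam i) →
      (∀ i j : Fin r, i ≤ j → mu j ≤ mu i) →
      Matrix.det (Matrix.of fun i j : Fin r =>
          veroneseSeq a d ((lam i : ℤ) - (mu j : ℤ) - (i : ℤ) + (j : ℤ))) =
        Matrix.det (Matrix.of fun i j : Fin r =>
          a (((d * lam i + (d - 1) * (r - 1 - (i : ℕ)) : ℕ) : ℤ)
            - ((d * mu j + (d - 1) * (r - 1 - (j : ℕ)) : ℕ) : ℤ)
            - (i : ℤ) + (j : ℤ)))) ∧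
    (∀ a' : ℤ → ℝ, (∀ k : ℤ, k < 0 → a' k = 0) →
      (∀ (n : ℕ) (r c : Fin n → ℕ), StrictMono r → StrictMono c →
        0 ≤ Matrix.det (Matrix.of fun i j : Fin n => a' ((r i : ℤ) - (c j : ℤ)))) →
      (∀ (n : ℕ) (r c : Fin n → ℕ), StrictMono r → StrictMono c →
        0 ≤ Matrix.det (Matrix.of fun i j : Fin n =>
          veroneseSeq a' d ((r i : ℤ) - (c j : ℤ))))) :=
  ⟨fun r lam mu _ _ => det_toeplitz_veroneseSeq ha hd r lam mu,
    fun _ ha' hpf => IsPolyaFrequency.veronese hpf ha' hd⟩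
end

section
/- Fix m ≥ 1 and s ≥ 0, and let a_d = dim S^d(ℂ^{m|s}) (the super symmetric power: a_d = ∑_{i=0}^d C(m + i − 1, i) · C(s, d − i)), with a_d = 0 for d < 0. For a partition λ of length ℓ, the Jacobi–Trudi determinant det( a(λ_i − i + j) )_{i,j=1}^ℓ is zero if and only if λ_{m+1} > s, i.e., iff the Young diagram of λ does not fit inside the (m|s)-hook {(i,j) : i ≤ m or j ≤ s}. -/
/-!
For `d ≥ s + 1 - m`, `a_d` is the value at `d` of a polynomial of degree `< m`: for `s = 0` it is
`C(d + m - 1, m - 1)`, and `a^{s+1}_d = a^s_d + a^s_{d-1}` (from `(1 + t)^{s+1} = (1 + t)(1 + t)^s`)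
preserves this. If `λ_{m+1} > s`, the first `m + 1` rows of the matrix are evaluations of `m + 1`
polynomials in an `m`-dimensional space, so the determinant vanishes.

Otherwise, the same recursion and multilinearity in the rows write the determinant at level
`s + 1` as the sum, over sets `S` of rows, of the determinants at level `s` of `λ` with one box
removed from every row in `S`. Every summand is `≥ 0` (it vanishes when two rows coincide, when a
part becomes negative, or by the first half), and removing a box from each row below the `m`-th
that is longer than `s` gives a positive one by induction. For `s = 0` one reduces to exactly
`m` rows; the matrix then factors as the Vandermonde matrix of the `λ_i - i` times a matrix `N`
not depending on `λ`, and the unitriangular matrix of the empty partition shows that `det N` has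
the sign of the Vandermonde determinant.
-/

/-- `a_d = dim S^d(ℂ^{m|s}) = ∑_{i=0}^d C(m+i−1, i)·C(s, d−i)`, extended by `0` on
negative integers. -/
def superSymDim (m s : ℕ) : ℤ → ℤ := fun d =>
  if d < 0 then 0
  else ∑ i ∈ Finset.range (d.toNat + 1),
    ((m + i - 1).choose i * s.choose (d.toNat - i) : ℤ)

open Polynomial Finset

theorem Matrix.det_eq_zero_of_rows_eq_eval {K ι : Type*} [Field K] [Fintype ι] [DecidableEq ι]
    {m : ℕ} (M : Matrix ι ι K) (e : Fin (m + 1) ↪ ι) (p : Fin (m + 1) → K[X])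
    (hp : ∀ i, p i ∈ degreeLT K m) (y : ι → K) (hM : ∀ i j, M (e i) j = (p i).eval (y j)) :
    M.det = 0 := by
  refine det_eq_zero_of_not_linearIndependent_rows fun hrows => ?_
  let c : Fin (m + 1) → Fin m → K := fun i => degreeLTEquiv K m ⟨p i, hp i⟩
  have hc : (fun i => M i) ∘ e
      = vecMulLinear (of fun (k : Fin m) j => y j ^ (k : ℕ)) ∘ c := by
    ext i j
    simp [hM, eval_eq_sum_degreeLTEquiv (hp i), vecMul, dotProduct, c, mul_comm]
  have := ((hc ▸ hrows.comp e e.injective).of_comp _).fintype_card_le_finrank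
  simp at this

theorem Polynomial.of_eval_add_eq_vandermonde_mul {R ι : Type*} [CommRing R] {m : ℕ} {p : R[X]}
    (hp : p ∈ degreeLT R m) (x : Fin m → R) (y : ι → R) :
    Matrix.of (fun i j => p.eval (x i + y j))
      = Matrix.vandermonde x * Matrix.of fun (k : Fin m) j => (taylor (y j) p).coeff k := by
  ext i j
  have hp' : taylor (y j) p ∈ degreeLT R m := by
    rwa [mem_degreeLT, degree_taylor, ← mem_degreeLT]
  simp [Matrix.mul_apply, ← taylor_eval, eval_eq_sum_degreeLTEquiv hp', degreeLTEquiv, mul_comm]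

theorem StrictAnti.antitone_add_val {l : ℕ} {κ : Fin l → ℤ} (hκ : StrictAnti κ) :
    Antitone fun i => κ i + i := by
  intro a b hab
  obtain ⟨d, hd⟩ := Nat.exists_eq_add_of_le (Fin.le_def.mp hab)
  induction d generalizing b with
  | zero => obtain rfl : b = a := Fin.ext (by omega); rfl
  | succ d ih =>
    have hd' : (a : ℕ) + d < l := by omega
    have h1 := ih (b := ⟨a + d, hd'⟩) (Fin.le_def.mpr (by simp)) rfl
    have h2 : κ b < κ ⟨a + d, hd'⟩ := hκ (Fin.lt_def.mpr (by simp; omega))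
    simp only at h1 ⊢
    push_cast at h1
    omega

namespace superSymDim

variable (m s : ℕ)

theorem of_neg {d : ℤ} (hd : d < 0) : superSymDim m s d = 0 := by
  simp [superSymDim, hd]

theorem natCast (n : ℕ) : superSymDim m s n
    = ∑ i ∈ range (n + 1), ((m + i - 1).choose i * s.choose (n - i) : ℤ) := by
  simp [superSymDim]

theorem apply_zero : superSymDim m s 0 = 1 := by
  simpa using natCast m s 0

theorem succ_right (d : ℤ) :
    superSymDim m (s + 1) d = superSymDim m s d + superSymDim m s (d - 1) := by
  rcases lt_or_ge d 0 with hd | hd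
  · simp [of_neg _ _ hd, of_neg _ _ (show d - 1 < 0 by omega)]
  lift d to ℕ using hd
  rcases d with _ | n
  · simp [apply_zero, of_neg]
  rw [show ((n + 1 : ℕ) : ℤ) - 1 = n by push_cast; ring, natCast, natCast, natCast,
    sum_range_succ, sum_range_succ _ (n + 1)]
  simp only [Nat.sub_self, Nat.choose_zero_right]
  rw [show ∑ i ∈ range (n + 1), ((m + i - 1).choose i * (s + 1).choose (n + 1 - i) : ℤ)
      = ∑ i ∈ range (n + 1), ((m + i - 1).choose i * s.choose (n + 1 - i) : ℤ)
        + ∑ i ∈ range (n + 1), ((m + i - 1).choose i * s.choose (n - i) : ℤ) by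
    rw [← sum_add_distrib]
    refine sum_congr rfl fun i hi => ?_
    rw [Nat.sub_add_comm (mem_range_succ_iff.mp hi), Nat.choose_succ_succ']
    push_cast; ring]
  ring

theorem succ_zero_natCast_sub (n t : ℕ) :
    superSymDim (n + 1) 0 ((t : ℤ) - n) = t.choose n := by
  rcases lt_or_ge t n with ht | ht
  · rw [of_neg _ _ (by omega), Nat.choose_eq_zero_of_lt ht, Nat.cast_zero]
  obtain ⟨k, rfl⟩ := Nat.exists_eq_add_of_le ht
  rw [show ((n + k : ℕ) : ℤ) - n = k by push_cast; ring, natCast, sum_range_succ,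
    sum_eq_zero fun i hi => by
      rw [Nat.choose_eq_zero_of_lt (show 0 < _ - i by simp at hi; omega)]; simp]
  simp [Nat.add_comm n k, Nat.choose_symm_add]

theorem exists_degreeLT_eval_eq : ∃ p ∈ degreeLT ℚ m,
    ∀ d : ℤ, (s : ℤ) + 1 - m ≤ d → p.eval (d : ℚ) = superSymDim m s d := by
  induction s with
  | zero =>
    rcases m with _ | n
    · refine ⟨0, zero_mem _, fun d hd => ?_⟩
      lift d to ℕ using (by omega)
      rw [natCast, eval_zero, sum_range_succ,
        sum_eq_zero fun i hi => by
          rw [Nat.choose_eq_zero_of_lt (show 0 < _ - i by simp at hi; omega)]; simp]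
      rw [Nat.choose_eq_zero_of_lt (by omega)]; simp
    · refine ⟨C (n.factorial : ℚ)⁻¹ * taylor (n : ℚ) (descPochhammer ℚ n), ?_,
        fun d hd => ?_⟩
      · rw [mem_degreeLT, degree_C_mul (by positivity), degree_taylor]
        exact degree_le_natDegree.trans_lt
          (by rw [descPochhammer_natDegree]; exact_mod_cast n.lt_succ_self)
      · obtain ⟨t, rfl⟩ : ∃ t : ℕ, d = t - n := ⟨(d + n).toNat, by omega⟩
        rw [succ_zero_natCast_sub, eval_mul, eval_C, taylor_eval]
        push_cast
        rw [sub_add_cancel, descPochhammer_eval_eq_descFactorial,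
          Nat.descFactorial_eq_factorial_mul_choose]
        push_cast
        field_simp
  | succ s ih =>
    obtain ⟨p, hp, hpeval⟩ := ih
    refine ⟨p + taylor (-1) p, add_mem hp ?_, fun d hd => ?_⟩
    · rwa [mem_degreeLT, degree_taylor, ← mem_degreeLT]
    · rw [succ_right, Int.cast_add, eval_add, taylor_eval, ← hpeval d (by omega),
        ← hpeval (d - 1) (by omega)]
      push_cast; ring_nf

end superSymDim

/-- Indexed by `κ i = λ i - i`, so that the Jacobi–Trudi matrix of `λ` is
`jacobiTrudi m s fun i => λ i - i`. -/
def jacobiTrudi (m s : ℕ) {l : ℕ} (κ : Fin l → ℤ) : Matrix (Fin l) (Fin l) ℤ :=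
  Matrix.of fun i j => superSymDim m s (κ i + j)

namespace jacobiTrudi

variable {m s l : ℕ}

theorem det_neg_val : (jacobiTrudi m s fun i : Fin l => -(i : ℤ)).det = 1 := by
  rw [Matrix.det_of_isUpperTriangular (M := jacobiTrudi m s _) fun i j hji =>
    superSymDim.of_neg m s (by simp only [id, Fin.lt_def] at hji; omega)]
  simp [jacobiTrudi, superSymDim.apply_zero]

theorem det_eq_det_castSucc {n : ℕ} (κ : Fin (n + 1) → ℤ) (hκ : κ (Fin.last n) = -n) :
    (jacobiTrudi m s κ).det = (jacobiTrudi m s (κ ∘ Fin.castSucc)).det := by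
  rw [Matrix.det_succ_row _ (Fin.last n), Fin.sum_univ_castSucc,
    sum_eq_zero fun j _ => by
      rw [jacobiTrudi, Matrix.of_apply, hκ, superSymDim.of_neg m s (by simp)]; simp]
  simp [jacobiTrudi, hκ, superSymDim.apply_zero, Matrix.submatrix]

theorem det_eq_det_castAdd : ∀ (k : ℕ) (κ : Fin (l + k) → ℤ),
    (∀ i : Fin (l + k), l ≤ (i : ℕ) → κ i = -i) →
    (jacobiTrudi m s κ).det = (jacobiTrudi m s (κ ∘ Fin.castAdd k)).det
  | 0, _, _ => rfl
  | k + 1, κ, hκ => by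
    rw [det_eq_det_castSucc κ (by simpa using hκ (Fin.last _) (by simp)),
      det_eq_det_castAdd k _ fun i hi => hκ _ hi]
    rfl

theorem det_eq_zero_of_neg {κ : Fin l → ℤ} (hκ : StrictAnti κ) {i : Fin l}
    (hi : κ i + i < 0) : (jacobiTrudi m s κ).det = 0 := by
  let r : Fin l := ⟨l - 1, by have := i.isLt; omega⟩
  have hr := hκ.antitone_add_val (show i ≤ r from Fin.le_def.mpr (by simp [r]; omega))
  refine Matrix.det_eq_zero_of_row_eq_zero r fun j => superSymDim.of_neg m s ?_
  simp only [r] at hr ⊢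
  have := j.isLt
  push_cast [Nat.cast_sub (show 1 ≤ l by omega)] at hr
  omega

theorem det_eq_zero_of_lt {κ : Fin l → ℤ} (hκ : Antitone κ) (hml : m < l)
    (hs : (s : ℤ) < κ ⟨m, hml⟩ + m) : (jacobiTrudi m s κ).det = 0 := by
  obtain ⟨p, hp, hpeval⟩ := superSymDim.exists_degreeLT_eval_eq m s
  rw [← Int.cast_eq_zero (α := ℚ), Int.cast_det]
  let e := Fin.castLEEmb hml
  refine Matrix.det_eq_zero_of_rows_eq_eval _ e (fun i => taylor (κ (e i) : ℚ) p)
    (fun i => by rwa [mem_degreeLT, degree_taylor, ← mem_degreeLT]) (fun j => (j : ℚ))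
    fun i j => ?_
  have : κ ⟨m, hml⟩ ≤ κ (e i) := hκ (Fin.le_def.mpr (by simp [e]; omega))
  rw [taylor_eval, Matrix.map_apply, jacobiTrudi, Matrix.of_apply, ← hpeval _ (by omega)]
  push_cast; ring_nf

theorem det_zero_pos_of_square {κ : Fin m → ℤ} (hκ : StrictAnti κ)
    (hκm : ∀ i, 1 - (m : ℤ) ≤ κ i) : 0 < (jacobiTrudi m 0 κ).det := by
  obtain ⟨p, hp, hpeval⟩ := superSymDim.exists_degreeLT_eval_eq m 0
  set N := Matrix.of fun (k : Fin m) (j : Fin m) => (taylor (j : ℚ) p).coeff k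
  have hfactor : ∀ ν : Fin m → ℤ, (∀ i, 1 - (m : ℤ) ≤ ν i) →
      ((jacobiTrudi m 0 ν).det : ℚ)
        = (Matrix.vandermonde fun i => (ν i : ℚ)).det * N.det := by
    intro ν hν
    rw [Int.cast_det, ← Matrix.det_mul, ← of_eval_add_eq_vandermonde_mul hp]
    congr 1
    ext i j
    rw [Matrix.map_apply, jacobiTrudi, Matrix.of_apply, Matrix.of_apply,
      ← hpeval _ (by have := hν i; simp; omega)]
    push_cast; rfl
  have h0 := hfactor (fun i => -(i : ℤ)) fun i => by have := i.isLt; omega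
  rw [det_neg_val, Int.cast_one] at h0
  have hV : 0 < (Matrix.vandermonde fun i => (κ i : ℚ)).det
      * (Matrix.vandermonde fun i : Fin m => ((-(i : ℤ) : ℤ) : ℚ)).det := by
    simp only [Matrix.det_vandermonde, ← prod_mul_distrib]
    refine prod_pos fun i _ => prod_pos fun j hj => mul_pos_of_neg_of_neg ?_ ?_
    · exact sub_neg.mpr (by exact_mod_cast hκ (mem_Ioi.mp hj))
    · have : (i : ℚ) < j := by exact_mod_cast mem_Ioi.mp hj
      push_cast; linarith
  have hN : N.det ≠ 0 := right_ne_zero_of_mul (h0 ▸ one_ne_zero)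
  have : (0 : ℚ) < (jacobiTrudi m 0 κ).det := by
    rw [hfactor κ hκm, ← mul_one (_ * _), h0]
    nlinarith [sq_pos_of_ne_zero hN]
  exact_mod_cast this

theorem det_zero_pos {κ : Fin l → ℤ} (hκ : StrictAnti κ) (hnonneg : ∀ i, 0 ≤ κ i + i)
    (hfit : ∀ h : m < l, κ ⟨m, h⟩ + m ≤ 0) : 0 < (jacobiTrudi m 0 κ).det := by
  rcases le_total l m with hlm | hml
  · obtain ⟨k, rfl⟩ := Nat.exists_eq_add_of_le hlm
    let κ' : Fin (l + k) → ℤ := fun i => if h : (i : ℕ) < l then κ ⟨i, h⟩ else -i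
    have hκ' : κ' ∘ Fin.castAdd k = κ := funext fun i => by simp [κ']
    rw [← hκ', ← det_eq_det_castAdd k κ' fun i hi => by simp [κ', hi.not_gt]]
    refine det_zero_pos_of_square (fun a b hab => ?_) fun i => ?_
    · have hab' := Fin.lt_def.mp hab
      simp only [κ']
      split_ifs with hb ha ha
      · exact hκ (Fin.lt_def.mpr hab')
      · omega
      · have := hnonneg ⟨a, ha⟩
        simp only at this
        omega
      · omega
    · have := i.isLt
      simp only [κ']
      split_ifs with hi
      · have := hnonneg ⟨i, hi⟩
        simp only at this
        push_cast
        omega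
      · omega
  · obtain ⟨k, rfl⟩ := Nat.exists_eq_add_of_le hml
    rw [det_eq_det_castAdd k κ fun i hi => ?_]
    · refine det_zero_pos_of_square (hκ.comp_strictMono (Fin.strictMono_castAdd k)) fun i => ?_
      have := hnonneg (Fin.castAdd k i)
      simp only [Fin.val_castAdd, Function.comp_apply] at this ⊢
      omega
    · have hm : m < m + k := lt_of_le_of_lt hi i.isLt
      have := hκ.antitone_add_val (show ⟨m, hm⟩ ≤ i from Fin.le_def.mpr hi)
      have := hfit hm
      have := hnonneg i
      simp only at *
      omega

theorem piecewise (κ κ' : Fin l → ℤ) (S : Finset (Fin l)) :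
    jacobiTrudi m s (S.piecewise κ κ')
      = S.piecewise (jacobiTrudi m s κ) (jacobiTrudi m s κ') := by
  ext i j
  by_cases hi : i ∈ S <;> simp [jacobiTrudi, Finset.piecewise, hi]

theorem det_succ_right (κ : Fin l → ℤ) :
    (jacobiTrudi m (s + 1) κ).det
      = ∑ S : Finset (Fin l), (jacobiTrudi m s (S.piecewise (κ - 1) κ)).det := by
  have h : jacobiTrudi m (s + 1) κ = jacobiTrudi m s (κ - 1) + jacobiTrudi m s κ := by
    ext i j
    simp only [jacobiTrudi, Matrix.of_apply, Matrix.add_apply, Pi.sub_apply, Pi.one_apply,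
      superSymDim.succ_right]
    ring_nf
  simp_rw [piecewise]
  rw [h]
  exact Matrix.detRowAlternating.map_add_univ _ _

theorem det_piecewise_nonneg
    (hnonneg : ∀ ν : Fin l → ℤ, StrictAnti ν → 0 ≤ (jacobiTrudi m s ν).det)
    {κ : Fin l → ℤ} (hκ : StrictAnti κ) (S : Finset (Fin l)) :
    0 ≤ (jacobiTrudi m s (S.piecewise (κ - 1) κ)).det := by
  set ν := S.piecewise (κ - 1) κ
  have hν : Antitone ν := fun a b hab => by
    rcases hab.lt_or_eq with hab | rfl
    · have := hκ hab
      simp only [ν, Finset.piecewise, Pi.sub_apply, Pi.one_apply]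
      split_ifs <;> omega
    · rfl
  by_cases hinj : Function.Injective ν
  · exact hnonneg ν (hν.strictAnti_of_injective hinj)
  obtain ⟨a, b, hab, hne⟩ := Function.not_injective_iff.mp hinj
  exact (Matrix.det_zero_of_row_eq hne (funext fun j => by simp [jacobiTrudi, hab])).ge

theorem det_nonneg_of_forall_pos
    (hpos : ∀ ν : Fin l → ℤ, StrictAnti ν → (∀ i, 0 ≤ ν i + i) →
      (∀ h : m < l, ν ⟨m, h⟩ + m ≤ s) → 0 < (jacobiTrudi m s ν).det)
    {κ : Fin l → ℤ} (hκ : StrictAnti κ) : 0 ≤ (jacobiTrudi m s κ).det := by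
  by_cases hneg : ∃ i, κ i + i < 0
  · obtain ⟨i, hi⟩ := hneg
    exact (det_eq_zero_of_neg hκ hi).ge
  by_cases hfit : ∀ h : m < l, κ ⟨m, h⟩ + m ≤ s
  · exact (hpos κ hκ (fun i => not_lt.mp fun h => hneg ⟨i, h⟩) hfit).le
  push Not at hfit
  obtain ⟨hml, hs⟩ := hfit
  exact (det_eq_zero_of_lt hκ.antitone hml hs).ge

theorem det_pos {κ : Fin l → ℤ} (hκ : StrictAnti κ) (hnonneg : ∀ i, 0 ≤ κ i + i)
    (hfit : ∀ h : m < l, κ ⟨m, h⟩ + m ≤ s) : 0 < (jacobiTrudi m s κ).det := by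
  induction s generalizing κ with
  | zero => exact det_zero_pos hκ hnonneg hfit
  | succ s ih =>
    let S := univ.filter fun i : Fin l => m ≤ (i : ℕ) ∧ (s : ℤ) < κ i + i
    let ν := S.piecewise (κ - 1) κ
    have hν : StrictAnti ν := fun a b hab => by
      have := hκ hab
      have := hκ.antitone_add_val hab.le
      have := Fin.lt_def.mp hab
      simp only [ν, S, Finset.piecewise, mem_filter, mem_univ, true_and, Pi.sub_apply,
        Pi.one_apply]
      split_ifs <;> omega
    have hνnonneg : ∀ i, 0 ≤ ν i + i := fun i => by
      have := hnonneg i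
      simp only [ν, S, Finset.piecewise, mem_filter, mem_univ, true_and, Pi.sub_apply,
        Pi.one_apply]
      split_ifs <;> omega
    have hνfit : ∀ h : m < l, ν ⟨m, h⟩ + m ≤ s := fun h => by
      have := hfit h
      simp only [ν, S, Finset.piecewise, mem_filter, mem_univ, true_and, Pi.sub_apply,
        Pi.one_apply]
      split_ifs <;> push_cast at * <;> omega
    calc 0 < (jacobiTrudi m s ν).det := ih hν hνnonneg hνfit
      _ ≤ ∑ S : Finset (Fin l), (jacobiTrudi m s (S.piecewise (κ - 1) κ)).det :=
        single_le_sum (fun S _ => det_piecewise_nonneg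
          (fun _ => det_nonneg_of_forall_pos fun _ => ih) hκ S) (mem_univ S)
      _ = (jacobiTrudi m (s + 1) κ).det := (det_succ_right κ).symm

end jacobiTrudi

theorem stmt_14_general (m s : ℕ) (l : ℕ) (lam : Fin l → ℕ)
    (hlam : ∀ i j : Fin l, i ≤ j → lam j ≤ lam i) :
    Matrix.det (Matrix.of fun i j : Fin l =>
        superSymDim m s ((lam i : ℤ) - (i : ℤ) + (j : ℤ))) = 0 ↔
      ∃ h : m < l, s < lam ⟨m, h⟩ := by
  have hκ : StrictAnti fun i : Fin l => (lam i : ℤ) - i := fun a b hab => by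
    have := hlam a b hab.le
    have := Fin.lt_def.mp hab
    show (lam b : ℤ) - b < lam a - a
    omega
  change (jacobiTrudi m s fun i => (lam i : ℤ) - i).det = 0 ↔ _
  constructor
  · intro hdet
    by_contra hfit
    push Not at hfit
    exact (jacobiTrudi.det_pos hκ (by simp) fun h => by simpa using hfit h).ne' hdet
  · rintro ⟨hml, hs⟩
    exact jacobiTrudi.det_eq_zero_of_lt hκ.antitone hml (by simpa using hs)

/-- for a partition `λ` of length `ℓ`, the Jacobi–Trudi determinant
`det(a(λ_i − i + j))` built from the super symmetric power dimensions of `ℂ^{m|s}`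
vanishes if and only if `λ_{m+1} > s`, i.e. iff `λ` does not fit in the `(m|s)`-hook. -/
theorem stmt_14 (m s : ℕ) (hm : 1 ≤ m) (l : ℕ) (lam : Fin l → ℕ)
    (hlam : ∀ i j : Fin l, i ≤ j → lam j ≤ lam i)
    (hpos : ∀ i, 0 < lam i) :
    Matrix.det (Matrix.of fun i j : Fin l =>
        superSymDim m s ((lam i : ℤ) - (i : ℤ) + (j : ℤ))) = 0 ↔
      ∃ h : m < l, s < lam ⟨m, h⟩ :=
  stmt_14_general m s l lam hlam
end
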